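/- arXiv:2010.03191 — 4 statements merged into one kernel-verified Lean document; each statement's English description precedes it below -/
import Mathlib

section
/- Let N > 0, λ > 0, P₀ ∈ (0,1]. If F(t) solves F'(t) = −(λP₀/2)·F(t) + (λP₀/2)·(N² − N(2−P₀)/P₀)·exp(−λP₀t) + N·(λ(2−P₀)/2)·exp(−λP₀t/2) with F(0) = 0, then F(t) = (N² − N(2−P₀)/P₀)·exp(−λP₀t/2)·(1 − exp(−λP₀t/2)) + N·(λ(2−P₀)t/2)·exp(−λP₀t/2). -/
/-!
Both sides of the claimed identity solve the same linear first-order ODE `y' = -(λP₀/2) y + g(t)`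
and vanish at `0`. Their difference `H` satisfies `H' = -(λP₀/2) H`, so `H(t) exp(λP₀t/2)` has
zero derivative; being constant and zero at `0`, it vanishes everywhere.
-/

open Real

theorem eq_mul_exp_of_hasDerivAt {H : ℝ → ℝ} {a : ℝ} (hH : ∀ t, HasDerivAt H (a * H t) t)
    (t : ℝ) : H t = H 0 * exp (a * t) := by
  have hK : ∀ s, HasDerivAt (fun s => H s * exp (-(a * s))) 0 s := fun s => by
    have he : HasDerivAt (fun s => exp (-(a * s))) (-a * exp (-(a * s))) s :=
      ((hasDerivAt_id' s).const_mul a).fun_neg.exp.congr_deriv (by ring)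
    exact ((hH s).fun_mul he).congr_deriv (by ring)
  have hconst := is_const_of_deriv_eq_zero (fun s => (hK s).differentiableAt)
    (fun s => (hK s).deriv) t 0
  simp only [mul_zero, neg_zero, exp_zero, mul_one] at hconst
  rw [← hconst, mul_assoc, ← exp_add, neg_add_cancel, exp_zero, mul_one]

theorem eq_of_hasDerivAt_sub_eq_mul_sub {F G F' G' : ℝ → ℝ} {a : ℝ}
    (hF : ∀ t, HasDerivAt F (F' t) t) (hG : ∀ t, HasDerivAt G (G' t) t)
    (hFG : ∀ t, F' t - G' t = a * (F t - G t)) (h0 : F 0 = G 0) (t : ℝ) : F t = G t := by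
  have hdiff : ∀ s, HasDerivAt (fun s => F s - G s) (a * (F s - G s)) s := fun s => by
    simpa only [hFG] using (hF s).fun_sub (hG s)
  have := eq_mul_exp_of_hasDerivAt hdiff t
  rwa [h0, sub_self, zero_mul, sub_eq_zero] at this

theorem hasDerivAt_exp_neg_mul_div_two (μ t : ℝ) :
    HasDerivAt (fun s => exp (-(μ * s) / 2)) (-(μ / 2) * exp (-(μ * t) / 2)) t := by
  convert (((hasDerivAt_id' t).const_mul μ).fun_neg.div_const 2).exp using 1
  ring

theorem hasDerivAt_stemCellSolution (μ A B t : ℝ) :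
    HasDerivAt (fun s => A * exp (-(μ * s) / 2) * (1 - exp (-(μ * s) / 2))
        + B * s * exp (-(μ * s) / 2))
      (-(μ / 2) * (A * exp (-(μ * t) / 2) * (1 - exp (-(μ * t) / 2))
          + B * t * exp (-(μ * t) / 2))
        + μ / 2 * A * exp (-(μ * t)) + B * exp (-(μ * t) / 2)) t := by
  have he := hasDerivAt_exp_neg_mul_div_two μ t
  have hsq : exp (-(μ * t)) = exp (-(μ * t) / 2) * exp (-(μ * t) / 2) := by
    rw [← exp_add, add_halves]
  exact (((he.const_mul A).fun_mul (he.const_sub 1)).fun_add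
    (((hasDerivAt_id' t).const_mul B).fun_mul he)).congr_deriv (by rw [hsq]; ring)

theorem stmt_6_general (N lam P0 : ℝ)
    (F : ℝ → ℝ)
    (hF : ∀ t : ℝ, HasDerivAt F
      (-(lam * P0 / 2) * F t
        + (lam * P0 / 2) * (N ^ 2 - N * (2 - P0) / P0) * Real.exp (-(lam * P0 * t))
        + N * (lam * (2 - P0) / 2) * Real.exp (-(lam * P0 * t) / 2)) t)
    (hF0 : F 0 = 0) :
    ∀ t : ℝ, F t =
      (N ^ 2 - N * (2 - P0) / P0) * Real.exp (-(lam * P0 * t) / 2) *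
        (1 - Real.exp (-(lam * P0 * t) / 2))
      + N * (lam * (2 - P0) * t / 2) * Real.exp (-(lam * P0 * t) / 2) := by
  intro t
  have hG := hasDerivAt_stemCellSolution (lam * P0) (N ^ 2 - N * (2 - P0) / P0)
    (N * (lam * (2 - P0) / 2))
  rw [eq_of_hasDerivAt_sub_eq_mul_sub hF hG (a := -(lam * P0 / 2)) (fun s => by ring)
    (by simp [hF0]) t]
  ring

theorem stmt_6 (N lam P0 : ℝ) (hN : 0 < N) (hlam : 0 < lam)
    (hP0 : P0 ∈ Set.Ioc (0:ℝ) 1)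
    (F : ℝ → ℝ)
    (hF : ∀ t : ℝ, HasDerivAt F
      (-(lam * P0 / 2) * F t
        + (lam * P0 / 2) * (N ^ 2 - N * (2 - P0) / P0) * Real.exp (-(lam * P0 * t))
        + N * (lam * (2 - P0) / 2) * Real.exp (-(lam * P0 * t) / 2)) t)
    (hF0 : F 0 = 0) :
    ∀ t : ℝ, F t =
      (N ^ 2 - N * (2 - P0) / P0) * Real.exp (-(lam * P0 * t) / 2) *
        (1 - Real.exp (-(lam * P0 * t) / 2))
      + N * (lam * (2 - P0) * t / 2) * Real.exp (-(lam * P0 * t) / 2) :=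
  stmt_6_general N lam P0 F hF hF0
end

section
/- Let N ≥ 1, λ > 0, P₀ ∈ (0,1]. Define Var_m(t) = ((2−P₀)N²/(NP₀ + 2(1−P₀)))·exp(−λP₀t/2) + (N²P₀(N−1)/(NP₀ + 2(1−P₀)))·exp(−(NλP₀ + λ(1−P₀))t/N) − N²·exp(−λP₀t) and Var_a(t) = N·exp(−λP₀t/2)·(1 − exp(−λP₀t/2)). Then Var_m(t) ≥ Var_a(t) for all t ≥ 0, with equality for all t when P₀ = 1. -/
/-!
Put `x = exp (-λP₀t/2)` and `E = exp (-λ(1-P₀)t/N)`. Over the common denominator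
`NP₀ + 2(1-P₀)` the difference `Var_m - Var_a` factors as `N(N-1)x` times
`2(1-P₀)(1-x) - NP₀x(1-E)`. The two elementary bounds `a e^{-a} ≤ 1 - e^{-a}` and
`1 - e^{-v} ≤ v`, applied with `a = λP₀t/2` and `v = λ(1-P₀)t/N`, bound both terms of this
factor by the same quantity `λP₀(1-P₀)t x`, so it is nonnegative. For `P₀ = 1` it vanishes.
-/

open Real

namespace Real

lemma mul_exp_neg_le_one_sub_exp_neg (a : ℝ) : a * exp (-a) ≤ 1 - exp (-a) := by
  have h := mul_le_mul_of_nonneg_left (add_one_le_exp a) (exp_pos (-a)).le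
  rw [← exp_add, neg_add_cancel, exp_zero] at h
  linarith

lemma one_sub_exp_neg_le (v : ℝ) : 1 - exp (-v) ≤ v := by
  linarith [one_sub_le_exp_neg v]

end Real

section StemCellVariance

variable (N lam P0 t : ℝ)

/-- `Var_m`. -/
noncomputable def varSymmetric : ℝ :=
  ((2 - P0) * N ^ 2 / (N * P0 + 2 * (1 - P0))) * Real.exp (-(lam * P0 * t) / 2)
    + (N ^ 2 * P0 * (N - 1) / (N * P0 + 2 * (1 - P0))) *
        Real.exp (-((N * lam * P0 + lam * (1 - P0)) * t / N))
    - N ^ 2 * Real.exp (-(lam * P0 * t))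

/-- `Var_a`. -/
noncomputable def varAsymmetric : ℝ :=
  N * Real.exp (-(lam * P0 * t) / 2) * (1 - Real.exp (-(lam * P0 * t) / 2))

noncomputable def varianceGapFactor : ℝ :=
  2 * (1 - P0) * (1 - exp (-(lam * P0 * t) / 2))
    - N * P0 * exp (-(lam * P0 * t) / 2) * (1 - exp (-(lam * (1 - P0) * t / N)))

lemma varSymmetric_sub_varAsymmetric (hN : N ≠ 0) (hD : N * P0 + 2 * (1 - P0) ≠ 0) :
    varSymmetric N lam P0 t - varAsymmetric N lam P0 t =
      N * (N - 1) * exp (-(lam * P0 * t) / 2) * varianceGapFactor N lam P0 t /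
        (N * P0 + 2 * (1 - P0)) := by
  have hsq : exp (-(lam * P0 * t)) = exp (-(lam * P0 * t) / 2) ^ 2 := by
    rw [← exp_nat_mul]; ring_nf
  have hmix : exp (-((N * lam * P0 + lam * (1 - P0)) * t / N)) =
      exp (-(lam * P0 * t) / 2) ^ 2 * exp (-(lam * (1 - P0) * t / N)) := by
    rw [← exp_nat_mul, ← exp_add]; congr 1; field_simp; ring
  rw [varSymmetric, varAsymmetric, varianceGapFactor, hsq, hmix]
  set D := N * P0 + 2 * (1 - P0)
  rw [eq_div_iff hD]
  field_simp
  ring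

lemma varianceGapFactor_nonneg (hN : 0 < N) (hP0 : 0 ≤ P0) (hP0' : P0 ≤ 1) :
    0 ≤ varianceGapFactor N lam P0 t := by
  have hx := mul_exp_neg_le_one_sub_exp_neg (lam * P0 * t / 2)
  have hE := one_sub_exp_neg_le (lam * (1 - P0) * t / N)
  rw [varianceGapFactor, neg_div]
  set x := exp (-(lam * P0 * t / 2))
  refine sub_nonneg.mpr ?_
  calc N * P0 * x * (1 - exp (-(lam * (1 - P0) * t / N)))
      ≤ N * P0 * x * (lam * (1 - P0) * t / N) := by gcongr
    _ = 2 * (1 - P0) * (lam * P0 * t / 2 * x) := by field_simp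
    _ ≤ 2 * (1 - P0) * (1 - x) := by gcongr

end StemCellVariance

theorem stmt_11_general (N lam P0 : ℝ) (hN : 1 ≤ N)
    (hP0 : P0 ∈ Set.Ioc (0:ℝ) 1)
    (Varm Vara : ℝ → ℝ)
    (hVarm : ∀ t, Varm t =
      ((2 - P0) * N ^ 2 / (N * P0 + 2 * (1 - P0))) * Real.exp (-(lam * P0 * t) / 2)
      + (N ^ 2 * P0 * (N - 1) / (N * P0 + 2 * (1 - P0))) *
          Real.exp (-((N * lam * P0 + lam * (1 - P0)) * t / N))
      - N ^ 2 * Real.exp (-(lam * P0 * t)))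
    (hVara : ∀ t, Vara t = N * Real.exp (-(lam * P0 * t) / 2) *
      (1 - Real.exp (-(lam * P0 * t) / 2))) :
    (∀ t : ℝ, 0 ≤ t → Vara t ≤ Varm t) ∧
    (P0 = 1 → ∀ t : ℝ, Varm t = Vara t) := by
  obtain ⟨hP0pos, hP0le⟩ := hP0
  have hNpos : 0 < N := by linarith
  have hD : 0 < N * P0 + 2 * (1 - P0) := by nlinarith
  have hgap (t : ℝ) : Varm t - Vara t =
      N * (N - 1) * exp (-(lam * P0 * t) / 2) * varianceGapFactor N lam P0 t /
        (N * P0 + 2 * (1 - P0)) := by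
    rw [hVarm, hVara]
    exact varSymmetric_sub_varAsymmetric N lam P0 t hNpos.ne' hD.ne'
  constructor
  · intro t _
    rw [← sub_nonneg, hgap]
    refine div_nonneg (mul_nonneg (mul_nonneg (mul_nonneg hNpos.le ?_) (exp_pos _).le) ?_) hD.le
    · linarith
    · exact varianceGapFactor_nonneg N lam P0 t hNpos hP0pos.le hP0le
  · rintro rfl t
    rw [← sub_eq_zero, hgap, varianceGapFactor]
    simp

theorem stmt_11 (N lam P0 : ℝ) (hN : 1 ≤ N) (hlam : 0 < lam)
    (hP0 : P0 ∈ Set.Ioc (0:ℝ) 1)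
    (Varm Vara : ℝ → ℝ)
    (hVarm : ∀ t, Varm t =
      ((2 - P0) * N ^ 2 / (N * P0 + 2 * (1 - P0))) * Real.exp (-(lam * P0 * t) / 2)
      + (N ^ 2 * P0 * (N - 1) / (N * P0 + 2 * (1 - P0))) *
          Real.exp (-((N * lam * P0 + lam * (1 - P0)) * t / N))
      - N ^ 2 * Real.exp (-(lam * P0 * t)))
    (hVara : ∀ t, Vara t = N * Real.exp (-(lam * P0 * t) / 2) *
      (1 - Real.exp (-(lam * P0 * t) / 2))) :
    (∀ t : ℝ, 0 ≤ t → Vara t ≤ Varm t) ∧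
    (P0 = 1 → ∀ t : ℝ, Varm t = Vara t) :=
  stmt_11_general N lam P0 hN hP0 Varm Vara hVarm hVara
end

section
/- Let N ≥ 1, λ > 0, P₀ ∈ (0,1]. Define g(t) = (2−P₀) + NP₀·exp(−λ(1−P₀)t/N)·exp(−λP₀t/2) − (NP₀ + 2(1−P₀))·exp(−λP₀t/2). Then g(0) = P₀ ≥ 0, g'(t) = λP₀·exp(−λP₀t/2)·(−1 + P₀ − NP₀/2)·(exp(−λ(1−P₀)t/N) − 1) ≥ 0 for all t ≥ 0 (assuming N ≥ 2 or NP₀/2 + 1 − P₀ ≥ 0), and hence g(t) ≥ 0 for all t ≥ 0. -/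
open Real

noncomputable def varianceGap (N lam P0 t : ℝ) : ℝ :=
  (2 - P0) + N * P0 * exp (-(lam * (1 - P0) * t) / N) * exp (-(lam * P0 * t) / 2)
    - (N * P0 + 2 * (1 - P0)) * exp (-(lam * P0 * t) / 2)

noncomputable def varianceGapDeriv (N lam P0 t : ℝ) : ℝ :=
  lam * P0 * exp (-(lam * P0 * t) / 2) * (-1 + P0 - N * P0 / 2) *
    (exp (-(lam * (1 - P0) * t) / N) - 1)

theorem varianceGap_zero (N lam P0 : ℝ) : varianceGap N lam P0 0 = P0 := by
  simp only [varianceGap, mul_zero, neg_zero, zero_div, exp_zero]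
  ring

theorem hasDerivAt_exp_neg_mul_div (c d t : ℝ) :
    HasDerivAt (fun s ↦ exp (-(c * s) / d)) (exp (-(c * t) / d) * (-c / d)) t := by
  have hlin : HasDerivAt (fun s ↦ -(c * s) / d) (-c / d) t := by
    simpa using (((hasDerivAt_id' t).const_mul c).neg).div_const d
  exact hlin.exp

theorem hasDerivAt_varianceGap {N : ℝ} (hN : N ≠ 0) (lam P0 t : ℝ) :
    HasDerivAt (varianceGap N lam P0) (varianceGapDeriv N lam P0 t) t := by
  have hE1 := hasDerivAt_exp_neg_mul_div (lam * (1 - P0)) N t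
  have hE2 := hasDerivAt_exp_neg_mul_div (lam * P0) 2 t
  have h := (((hE1.const_mul (N * P0)).mul hE2).const_add (2 - P0)).sub
    (hE2.const_mul (N * P0 + 2 * (1 - P0)))
  refine h.congr_deriv ?_
  simp only [varianceGapDeriv]
  field_simp
  ring

theorem varianceGapDeriv_nonneg {N lam P0 t : ℝ} (hN : 0 < N) (hlam : 0 ≤ lam) (hP0 : 0 ≤ P0)
    (hP1 : P0 ≤ 1) (hcond : 0 ≤ N * P0 / 2 + 1 - P0) (ht : 0 ≤ t) :
    0 ≤ varianceGapDeriv N lam P0 t := by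
  have hexp : exp (-(lam * (1 - P0) * t) / N) ≤ 1 := by
    rw [exp_le_one_iff, neg_div, neg_nonpos]
    have : 0 ≤ 1 - P0 := by linarith
    positivity
  have hcoef : -1 + P0 - N * P0 / 2 ≤ 0 := by linarith
  exact mul_nonneg_of_nonpos_of_nonpos (mul_nonpos_of_nonneg_of_nonpos (by positivity) hcoef)
    (by linarith)

theorem monotoneOn_Ici_of_hasDerivAt_nonneg {f f' : ℝ → ℝ} {a : ℝ}
    (hf : ∀ x, a ≤ x → HasDerivAt f (f' x) x) (hf' : ∀ x, a ≤ x → 0 ≤ f' x) :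
    MonotoneOn f (Set.Ici a) := by
  refine monotoneOn_of_hasDerivWithinAt_nonneg (f' := f') (convex_Ici a)
    (fun x hx ↦ (hf x hx).continuousAt.continuousWithinAt) (fun x hx ↦ ?_) (fun x hx ↦ ?_)
  all_goals rw [interior_Ici] at hx
  · exact (hf x (le_of_lt hx)).hasDerivWithinAt
  · exact hf' x (le_of_lt hx)

theorem stmt_12 (N lam P0 : ℝ) (hN : 1 ≤ N) (hlam : 0 < lam)
    (hP0 : P0 ∈ Set.Ioc (0:ℝ) 1)
    (hcond : 0 ≤ N * P0 / 2 + 1 - P0)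
    (g : ℝ → ℝ)
    (hg : ∀ t, g t = (2 - P0)
      + N * P0 * Real.exp (-(lam * (1 - P0) * t) / N) * Real.exp (-(lam * P0 * t) / 2)
      - (N * P0 + 2 * (1 - P0)) * Real.exp (-(lam * P0 * t) / 2)) :
    (g 0 = P0 ∧ 0 ≤ P0) ∧
    (∀ t : ℝ, 0 ≤ t →
      HasDerivAt g
        (lam * P0 * Real.exp (-(lam * P0 * t) / 2) * (-1 + P0 - N * P0 / 2) *
          (Real.exp (-(lam * (1 - P0) * t) / N) - 1)) t ∧
      0 ≤ lam * P0 * Real.exp (-(lam * P0 * t) / 2) * (-1 + P0 - N * P0 / 2) *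
          (Real.exp (-(lam * (1 - P0) * t) / N) - 1)) ∧
    (∀ t : ℝ, 0 ≤ t → 0 ≤ g t) := by
  obtain ⟨hP0pos, hP0le⟩ := hP0
  have hNpos : 0 < N := by linarith
  obtain rfl : g = varianceGap N lam P0 := funext hg
  have hderiv (t : ℝ) (ht : 0 ≤ t) :
      HasDerivAt (varianceGap N lam P0) (varianceGapDeriv N lam P0 t) t ∧
        0 ≤ varianceGapDeriv N lam P0 t :=
    ⟨hasDerivAt_varianceGap hNpos.ne' lam P0 t,
      varianceGapDeriv_nonneg hNpos hlam.le hP0pos.le hP0le hcond ht⟩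
  have hmono := monotoneOn_Ici_of_hasDerivAt_nonneg (fun x hx ↦ (hderiv x hx).1)
    (fun x hx ↦ (hderiv x hx).2)
  refine ⟨⟨varianceGap_zero N lam P0, hP0pos.le⟩, hderiv, fun t ht ↦ ?_⟩
  calc 0 ≤ P0 := hP0pos.le
    _ = varianceGap N lam P0 0 := (varianceGap_zero N lam P0).symm
    _ ≤ varianceGap N lam P0 t := hmono Set.self_mem_Ici ht ht
end

section
/- Let N > 0, λ > 0, P₀ ∈ (0,1]. Define V_s(t) = N·((2−P₀)/P₀)·exp(−λP₀t/2)·(1 − exp(−λP₀t/2)) + Nλt·(1 − (2−P₀)·exp(−λP₀t/2)) and V_a(t) = N·exp(−λP₀t/2)·(1 − exp(−λP₀t/2)). Then V_s(t) ≥ V_a(t) for all t ≥ 0. -/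
/-!
Put `x = λP₀t/2` and `u = exp (-x)`. Since `λt = 2x/P₀`,
`V_s - V_a = (2N/P₀) · ((1 - P₀) u (1 - u) + x (1 - (2 - P₀) u))`, and the bracket is affine in `P₀`,
so it suffices to check `P₀ = 1`, where it is `x (1 - u) ≥ 0`, and `P₀ = 0`, where it is
`u (1 - u) + x (1 - 2u)`. The latter is nonnegative using only `u (1 + x) ≤ 1`, i.e. `1 + x ≤ exp x`.
-/

open Real

lemma exp_neg_mul_one_add_le_one (x : ℝ) : exp (-x) * (1 + x) ≤ 1 := by
  calc exp (-x) * (1 + x) ≤ exp (-x) * exp x := by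
        gcongr
        linarith [add_one_le_exp x]
    _ = 1 := by rw [← exp_add, neg_add_cancel, exp_zero]

/-- For `u > 1/2`, the bound `x u ≤ 1 - u` gives `u · (bracket) ≥ (1 - u)³`. -/
lemma mul_one_sub_add_mul_one_sub_two_mul_nonneg {u x : ℝ} (hx : 0 ≤ x) (hu : 0 ≤ u)
    (h : u * (1 + x) ≤ 1) : 0 ≤ u * (1 - u) + x * (1 - 2 * u) := by
  have hu1 : u ≤ 1 := by nlinarith
  rcases le_or_gt u (1 / 2) with hsmall | hlarge
  · have : 0 ≤ x * (1 - 2 * u) := mul_nonneg hx (by linarith)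
    nlinarith
  · nlinarith [mul_le_mul_of_nonneg_left h (by linarith : (0 : ℝ) ≤ 2 * u - 1),
      pow_nonneg (sub_nonneg.mpr hu1) 3]

lemma variance_gap_nonneg {p u x : ℝ} (hp0 : 0 ≤ p) (hp1 : p ≤ 1) (hx : 0 ≤ x) (hu : 0 ≤ u)
    (h : u * (1 + x) ≤ 1) : 0 ≤ (1 - p) * u * (1 - u) + x * (1 - (2 - p) * u) := by
  have hu1 : u ≤ 1 := by nlinarith
  have hconvex : (1 - p) * u * (1 - u) + x * (1 - (2 - p) * u)
      = (1 - p) * (u * (1 - u) + x * (1 - 2 * u)) + p * (x * (1 - u)) := by ring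
  rw [hconvex]
  have hzero := mul_one_sub_add_mul_one_sub_two_mul_nonneg hx hu h
  have hone : 0 ≤ x * (1 - u) := mul_nonneg hx (by linarith)
  exact add_nonneg (mul_nonneg (by linarith) hzero) (mul_nonneg hp0 hone)

theorem stmt_14 (N lam P0 : ℝ) (hN : 0 < N) (hlam : 0 < lam)
    (hP0 : P0 ∈ Set.Ioc (0:ℝ) 1)
    (Vs Va : ℝ → ℝ)
    (hVs : ∀ t, Vs t =
      N * ((2 - P0) / P0) * Real.exp (-(lam * P0 * t) / 2) *
        (1 - Real.exp (-(lam * P0 * t) / 2))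
      + N * lam * t * (1 - (2 - P0) * Real.exp (-(lam * P0 * t) / 2)))
    (hVa : ∀ t, Va t = N * Real.exp (-(lam * P0 * t) / 2) *
      (1 - Real.exp (-(lam * P0 * t) / 2))) :
    ∀ t : ℝ, 0 ≤ t → Va t ≤ Vs t := by
  obtain ⟨hP0pos, hP0le⟩ := hP0
  intro t ht
  set x := lam * P0 * t / 2
  have hexp : -(lam * P0 * t) / 2 = -x := by ring
  rw [hVs, hVa, hexp]
  have hgap : 0 ≤ (1 - P0) * exp (-x) * (1 - exp (-x)) + x * (1 - (2 - P0) * exp (-x)) :=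
    variance_gap_nonneg hP0pos.le hP0le (by positivity) (exp_pos _).le
      (exp_neg_mul_one_add_le_one x)
  have hdiff : N * ((2 - P0) / P0) * exp (-x) * (1 - exp (-x))
        + N * lam * t * (1 - (2 - P0) * exp (-x)) - N * exp (-x) * (1 - exp (-x))
      = 2 * N / P0 * ((1 - P0) * exp (-x) * (1 - exp (-x)) + x * (1 - (2 - P0) * exp (-x))) := by
    field_simp
    ring
  have := mul_nonneg (by positivity : (0 : ℝ) ≤ 2 * N / P0) hgap
  linarith
end
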